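/- Normal wall paths are rough geodesics: let C be an m-gluable system of chains on a set with walls (S,P), let x,y ∈ X_C with dist_C(x,y) = n, and for 0 ≤ r ≤ n let σ_{xy}(r) be the gate of y to the ball B(x,r). Then for every 0 ≤ r ≤ n one has r − m ≤ dist_C(x, σ_{xy}(r)) ≤ r and n − r ≤ dist_C(σ_{xy}(r), y) ≤ n − r + m; moreover, for all 0 ≤ r₁ ≤ r₂ ≤ n, |dist_C(σ_{xy}(r₁), σ_{xy}(r₂)) − (r₂ − r₁)| ≤ 3m. -/

import Mathlib

open Set

namespace WallDuality

variable {S : Type*}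

/-- A wall on `S`, recorded as the unordered pair of its two complementary halfspaces. -/
def IsWall (h : Set (Set S)) : Prop := ∃ A : Set S, h = {A, Aᶜ}

/-- A set with walls: every element of `P` is a wall on `S`. -/
def IsWallSystem (P : Set (Set (Set S))) : Prop := ∀ h ∈ P, IsWall h

variable (P : Set (Set (Set S)))

/-- An ultrafilter on `P`: a consistent choice of a halfspace of each wall of `P`. -/
def IsUltra (x : ↥P → Set S) : Prop :=
  (∀ w : ↥P, x w ∈ w.1) ∧
    ∀ (w₁ w₂ : ↥P) (A B : Set S), A ∈ w₁.1 → B ∈ w₂.1 → A ⊆ B → x w₁ = A → x w₂ = B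

/-- The set `X̂` of all ultrafilters on `P`. -/
def hatX : Set (↥P → Set S) := {x | IsUltra P x}

/-- The principal ultrafilter of a point `s`: each wall is oriented towards `s`. -/
def principalUF (s : S) : ↥P → Set S := fun w => ⋃₀ {A | A ∈ w.1 ∧ s ∈ A}

/-- The pseudodistance associated with a collection `C` of subsets of `P`:
the supremum of the cardinalities of members of `C` all of whose walls separate
the two orientations. -/
noncomputable def wallDist (C : Set (Set ↥P)) (x y : ↥P → Set S) : ℕ∞ :=
  ⨆ c ∈ {c | c ∈ C ∧ ∀ w ∈ c, x w ≠ y w}, c.encard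

/-- A dualisable system on `(S, P)`. -/
structure IsDualisable (C : Set (Set ↥P)) : Prop where
  singleton_mem : ∀ w : ↥P, ({w} : Set ↥P) ∈ C
  subset_mem : ∀ c ∈ C, ∀ c' ⊆ c, c' ∈ C
  bounded : ∀ s t : S, ∃ M : ℕ, ∀ c ∈ C,
    (∀ w ∈ c, principalUF P s w ≠ principalUF P t w) → c.encard ≤ (M : ℕ∞)

/-- The dual space `X_C`: ultrafilters at finite distance from all principal ones. -/
def dualSpace (C : Set (Set ↥P)) : Set (↥P → Set S) :=
  {x | IsUltra P x ∧ ∀ s : S, wallDist P C x (principalUF P s) ≠ ⊤}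

/-- The majority-vote median of three orientations. -/
def medianUF (x y z : ↥P → Set S) : ↥P → Set S :=
  fun w => x w ∩ y w ∪ x w ∩ z w ∪ y w ∩ z w

/-- A `P`-convex subset of `X̂`: an intersection of halfspaces. -/
def IsPConvex (C' : Set (↥P → Set S)) : Prop :=
  ∃ (Q : Set ↥P) (σ : ↥P → Set S), (∀ w ∈ Q, σ w ∈ w.1) ∧
    C' = {v | IsUltra P v ∧ ∀ w ∈ Q, v w = σ w}

open scoped Classical in
/-- The gate of `z` to a set `C'` of orientations: reverse the orientation of exactly
those walls that separate `z` from `C'`. -/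
noncomputable def gateUF (C' : Set (↥P → Set S)) (z : ↥P → Set S) : ↥P → Set S :=
  fun w => if ∃ v ∈ C', v w = z w then z w else (z w)ᶜ

/-- `A` is gated in `Y` (with respect to the majority-vote median). -/
def IsGatedIn (Y A : Set (↥P → Set S)) : Prop :=
  ∀ x ∈ Y, ∃! g, g ∈ A ∧ ∀ a ∈ A, medianUF P a g x = g

/-- `σ` is a nested choice of halfspaces witnessing that `c` is a chain. -/
def IsChainOrder (σ : ↥P → Set S) (c : Set ↥P) : Prop :=
  (∀ w ∈ c, σ w ∈ w.1) ∧ ∀ w₁ ∈ c, ∀ w₂ ∈ c, σ w₁ ⊆ σ w₂ ∨ σ w₂ ⊆ σ w₁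

/-- A chain of walls. -/
def IsWallChain (c : Set ↥P) : Prop := ∃ σ, IsChainOrder P σ c

/-- A system of chains: a dualisable system all of whose members are chains. -/
def IsChainSystem (C : Set (Set ↥P)) : Prop :=
  IsDualisable P C ∧ ∀ c ∈ C, IsWallChain P c

/-- `C` is `m`-gluable: two members of `C`, one entirely preceding the other and with
union a chain, can be glued after removing at most `m` consecutive walls taken from
the last `m` walls of the first and the first `m` walls of the second. -/
def IsGluable (C : Set (Set ↥P)) (m : ℕ) : Prop :=
  ∀ c₁ ∈ C, ∀ c₂ ∈ C, ∀ σ : ↥P → Set S,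
    IsChainOrder P σ (c₁ ∪ c₂) → Disjoint c₁ c₂ →
    (∀ w₁ ∈ c₁, ∀ w₂ ∈ c₂, σ w₁ ⊆ σ w₂) →
    ∃ b ⊆ c₁ ∪ c₂,
      b.encard ≤ (m : ℕ∞) ∧
      (∀ w ∈ b ∩ c₁, {w' | w' ∈ c₁ ∧ σ w ⊂ σ w'}.encard < (m : ℕ∞)) ∧
      (∀ w ∈ b ∩ c₂, {w' | w' ∈ c₂ ∧ σ w' ⊂ σ w}.encard < (m : ℕ∞)) ∧
      (∀ w₁ ∈ b, ∀ w₂ ∈ b, ∀ w ∈ c₁ ∪ c₂, σ w₁ ⊆ σ w → σ w ⊆ σ w₂ → w ∈ b) ∧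
      (c₁ ∪ c₂) \ b ∈ C

/-- The ball of radius `r` about `x` in `X_C`. -/
def ballX (C : Set (Set ↥P)) (x : ↥P → Set S) (r : ℕ∞) : Set (↥P → Set S) :=
  {z | z ∈ dualSpace P C ∧ wallDist P C x z ≤ r}

/-- The normal wall path: the gate of `y` to the ball of radius `r` about `x`. -/
noncomputable def nwp (C : Set (Set ↥P)) (x y : ↥P → Set S) (r : ℕ) : ↥P → Set S :=
  gateUF P (ballX P C x (r : ℕ∞)) y

/-- Two walls cross: all four quarterspaces are nonempty. -/
def Crosses (w₁ w₂ : ↥P) : Prop := ∀ A ∈ w₁.1, ∀ B ∈ w₂.1, (A ∩ B).Nonempty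

/-- `C` is `L`-separated. -/
def IsSeparated (C : Set (Set ↥P)) (L : ℕ) : Prop :=
  ∀ w₁ w₂ : ↥P, w₁ ≠ w₂ → ({w₁, w₂} : Set ↥P) ∈ C →
    ∀ c ∈ C, (∀ w ∈ c, Crosses P w w₁ ∧ Crosses P w w₂) → c.encard ≤ (L : ℕ∞)

end WallDuality

namespace WallDuality

section Aux

variable {S : Type*} {P : Set (Set (Set S))} {C : Set (Set ↥P)}

lemma compl_mem_wall (hP : IsWallSystem P) (w : ↥P) {B : Set S} (hB : B ∈ w.1) :
    Bᶜ ∈ w.1 := by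
  obtain ⟨A, hA⟩ := hP w.1 w.2
  simp only [hA, Set.mem_insert_iff, Set.mem_singleton_iff] at hB ⊢
  rcases hB with rfl | rfl
  · exact Or.inr rfl
  · exact Or.inl (compl_compl A)

lemma ne_compl_self (s₀ : S) (B : Set S) : B ≠ Bᶜ := by
  intro h
  by_cases hs : s₀ ∈ B
  · exact (h ▸ hs) hs
  · exact hs (h.symm ▸ (show s₀ ∈ Bᶜ from hs))

lemma eq_compl_of_ne (hP : IsWallSystem P) (w : ↥P) {B B' : Set S}
    (hB : B ∈ w.1) (hB' : B' ∈ w.1) (h : B' ≠ B) : B' = Bᶜ := by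
  obtain ⟨A, hA⟩ := hP w.1 w.2
  simp only [hA, Set.mem_insert_iff, Set.mem_singleton_iff] at hB hB'
  rcases hB with rfl | rfl <;> rcases hB' with rfl | rfl <;> simp_all [compl_compl]

lemma wall_pair (hP : IsWallSystem P) (w : ↥P) {B : Set S} (hB : B ∈ w.1) :
    w.1 = {B, Bᶜ} := by
  obtain ⟨A, hA⟩ := hP w.1 w.2
  simp only [hA, Set.mem_insert_iff, Set.mem_singleton_iff] at hB
  rcases hB with rfl | rfl
  · exact hA
  · rw [hA, compl_compl]; exact Set.pair_comm A Aᶜ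

lemma wall_eq_of_mem (hP : IsWallSystem P) {w w' : ↥P} {B : Set S}
    (h : B ∈ w.1) (h' : B ∈ w'.1) : w = w' :=
  Subtype.ext ((wall_pair hP w h).trans (wall_pair hP w' h').symm)

lemma ultra_mono {x : ↥P → Set S} (hx : IsUltra P x) (w₁ w₂ : ↥P) {B : Set S}
    (hB : B ∈ w₂.1) (h : x w₁ ⊆ B) : x w₂ = B :=
  hx.2 w₁ w₂ (x w₁) B (hx.1 w₁) hB h rfl

lemma wallDist_le {x z : ↥P → Set S} {k : ℕ∞}
    (h : ∀ c ∈ C, (∀ w ∈ c, x w ≠ z w) → c.encard ≤ k) : wallDist P C x z ≤ k :=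
  iSup₂_le fun c hc => h c hc.1 hc.2

lemma le_wallDist {x z : ↥P → Set S} {c : Set ↥P} (hc : c ∈ C)
    (hsep : ∀ w ∈ c, x w ≠ z w) : c.encard ≤ wallDist P C x z :=
  le_iSup₂ (f := fun c (_ : c ∈ {c | c ∈ C ∧ ∀ w ∈ c, x w ≠ z w}) => c.encard) c ⟨hc, hsep⟩

lemma exists_of_lt_wallDist {x z : ↥P → Set S} {k : ℕ∞} (h : k < wallDist P C x z) :
    ∃ c ∈ C, (∀ w ∈ c, x w ≠ z w) ∧ k < c.encard := by
  obtain ⟨c, hc⟩ := lt_iSup_iff.mp h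
  by_cases hm : c ∈ {c | c ∈ C ∧ ∀ w ∈ c, x w ≠ z w}
  · rw [iSup_pos hm] at hc
    exact ⟨c, hm.1, hm.2, hc⟩
  · rw [iSup_neg hm] at hc
    exact absurd hc (by simp)

lemma wallDist_self_le {x : ↥P → Set S} {k : ℕ∞} : wallDist P C x x ≤ k :=
  wallDist_le fun c _ h => by
    have hc : c = ∅ := Set.eq_empty_iff_forall_notMem.mpr fun w hw => (h w hw) rfl
    simp [hc]

lemma exists_coe_of_le {a : ℕ∞} {n : ℕ} (h : a ≤ (n : ℕ∞)) : ∃ k : ℕ, a = ↑k ∧ k ≤ n := by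
  have hne : a ≠ ⊤ := by intro ht; rw [ht] at h; simp at h
  lift a to ℕ using hne
  exact ⟨a, rfl, by exact_mod_cast h⟩

lemma finite_of_encard_le {α : Type*} {c : Set α} {n : ℕ} (h : c.encard ≤ (n : ℕ∞)) :
    c.Finite := by
  rw [← Set.encard_lt_top_iff]
  obtain ⟨k, hk, -⟩ := exists_coe_of_le h
  rw [hk]
  exact lt_top_iff_ne_top.mpr (by simp)

lemma mem_ball_self {x : ↥P → Set S} (hx : x ∈ dualSpace P C) (r : ℕ∞) :
    x ∈ ballX P C x r :=
  ⟨hx, wallDist_self_le⟩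

lemma chain_comp (hP : IsWallSystem P) (hC : IsChainSystem P C)
    {x y : ↥P → Set S} (hx : IsUltra P x) (hy : IsUltra P y)
    {c : Set ↥P} (hc : c ∈ C) (hsep : ∀ w ∈ c, x w ≠ y w)
    {w₁ w₂ : ↥P} (h₁ : w₁ ∈ c) (h₂ : w₂ ∈ c) :
    y w₁ ⊆ y w₂ ∨ y w₂ ⊆ y w₁ := by
  obtain ⟨σ, hσ1, hσ2⟩ := hC.2 c hc
  have key : ∀ u₁ ∈ c, ∀ u₂ ∈ c, σ u₁ ⊆ σ u₂ → (y u₁ ⊆ y u₂ ∨ y u₂ ⊆ y u₁) := by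
    intro u₁ hu₁ u₂ hu₂ hss
    by_cases hy1 : y u₁ = σ u₁
    · left
      have h2 : y u₂ = σ u₂ := ultra_mono hy u₁ u₂ (hσ1 u₂ hu₂) (by rw [hy1]; exact hss)
      rw [hy1, h2]; exact hss
    · have hy1' : y u₁ = (σ u₁)ᶜ := eq_compl_of_ne hP u₁ (hσ1 u₁ hu₁) (hy.1 u₁) hy1
      by_cases hy2 : y u₂ = σ u₂
      · exfalso
        have hx2 : x u₂ = (σ u₂)ᶜ := by
          refine eq_compl_of_ne hP u₂ (hσ1 u₂ hu₂) (hx.1 u₂) ?_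
          rw [← hy2]; exact hsep u₂ hu₂
        have hx1 : x u₁ = (σ u₁)ᶜ := by
          refine ultra_mono hx u₂ u₁ (compl_mem_wall hP u₁ (hσ1 u₁ hu₁)) ?_
          rw [hx2]; exact compl_subset_compl.mpr hss
        exact hsep u₁ hu₁ (hx1.trans hy1'.symm)
      · right
        have hy2' : y u₂ = (σ u₂)ᶜ := eq_compl_of_ne hP u₂ (hσ1 u₂ hu₂) (hy.1 u₂) hy2
        rw [hy1', hy2']; exact compl_subset_compl.mpr hss
  rcases hσ2 w₁ h₁ w₂ h₂ with h | h
  · exact key w₁ h₁ w₂ h₂ h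
  · exact (key w₂ h₂ w₁ h₁ h).symm

lemma exists_max_wall (hP : IsWallSystem P) (hC : IsChainSystem P C)
    {x y : ↥P → Set S} (hx : IsUltra P x) (hy : IsUltra P y)
    {c : Set ↥P} (hc : c ∈ C) (hsep : ∀ w ∈ c, x w ≠ y w)
    (hfin : c.Finite) (hne : c.Nonempty) :
    ∃ w₀ ∈ c, ∀ w ∈ c, y w ⊆ y w₀ := by
  obtain ⟨w₀, hw₀, hmax⟩ := Set.Finite.exists_maximalFor (fun w => y w) c hfin hne
  refine ⟨w₀, hw₀, fun w hw => ?_⟩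
  rcases chain_comp hP hC hx hy hc hsep hw hw₀ with h | h
  · exact h
  · exact hmax hw h

lemma exists_min_wall (hP : IsWallSystem P) (hC : IsChainSystem P C)
    {x y : ↥P → Set S} (hx : IsUltra P x) (hy : IsUltra P y)
    {c : Set ↥P} (hc : c ∈ C) (hsep : ∀ w ∈ c, x w ≠ y w)
    (hfin : c.Finite) (hne : c.Nonempty) :
    ∃ w₀ ∈ c, ∀ w ∈ c, y w₀ ⊆ y w := by
  obtain ⟨w₀, hw₀, hmin⟩ := Set.Finite.exists_minimalFor (fun w => y w) c hfin hne
  refine ⟨w₀, hw₀, fun w hw => ?_⟩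
  rcases chain_comp hP hC hx hy hc hsep hw hw₀ with h | h
  · exact hmin hw h
  · exact h

lemma wit_chain_le (hP : IsWallSystem P) (hC : IsChainSystem P C)
    {x y : ↥P → Set S} (hx : IsUltra P x) (hy : IsUltra P y) {r : ℕ∞} {c : Set ↥P}
    (hc : c ∈ C) (hsep : ∀ w ∈ c, x w ≠ y w)
    (hwit : ∀ w ∈ c, ∃ v ∈ ballX P C x r, v w = y w) (hfin : c.Finite) :
    c.encard ≤ r := by
  rcases c.eq_empty_or_nonempty with rfl | hne
  · simp
  obtain ⟨w₀, hw₀, hmin⟩ := exists_min_wall hP hC hx hy hc hsep hfin hne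
  obtain ⟨v, hvB, hv0⟩ := hwit w₀ hw₀
  have hvU : IsUltra P v := hvB.1.1
  have hsepv : ∀ w ∈ c, x w ≠ v w := by
    intro w hw
    have hvw : v w = y w := ultra_mono hvU w₀ w (hy.1 w) (by rw [hv0]; exact hmin w hw)
    rw [hvw]; exact hsep w hw
  exact (le_wallDist hc hsepv).trans hvB.2

lemma nwp_eq_of_wit {x y : ↥P → Set S} {r : ℕ} {w : ↥P}
    (h : ∃ v ∈ ballX P C x (r : ℕ∞), v w = y w) : nwp P C x y r w = y w := by
  simp only [nwp, gateUF]; rw [if_pos h]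

lemma nwp_eq_of_not_wit {x y : ↥P → Set S} {r : ℕ} {w : ↥P}
    (h : ¬ ∃ v ∈ ballX P C x (r : ℕ∞), v w = y w) : nwp P C x y r w = (y w)ᶜ := by
  simp only [nwp, gateUF]; rw [if_neg h]

lemma sep_nwp_left (hP : IsWallSystem P) {x y : ↥P → Set S}
    (hx : x ∈ dualSpace P C) (hy : IsUltra P y) {r : ℕ} {w : ↥P}
    (h : x w ≠ nwp P C x y r w) :
    (∃ v ∈ ballX P C x (r : ℕ∞), v w = y w) ∧ x w ≠ y w ∧ nwp P C x y r w = y w := by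
  by_cases hw : ∃ v ∈ ballX P C x (r : ℕ∞), v w = y w
  · have he := nwp_eq_of_wit (C := C) hw
    exact ⟨hw, by rwa [he] at h, he⟩
  · exfalso
    have hxy : x w ≠ y w := fun hxy => hw ⟨x, mem_ball_self hx _, hxy⟩
    have hx' : x w = (y w)ᶜ := eq_compl_of_ne hP w (hy.1 w) (hx.1.1 w) hxy
    exact h (hx'.trans (nwp_eq_of_not_wit hw).symm)

lemma sep_nwp_right (hP : IsWallSystem P) {x y : ↥P → Set S}
    (hx : x ∈ dualSpace P C) (hy : IsUltra P y) {r : ℕ} {w : ↥P}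
    (h : nwp P C x y r w ≠ y w) :
    (¬ ∃ v ∈ ballX P C x (r : ℕ∞), v w = y w) ∧ x w = (y w)ᶜ ∧ x w ≠ y w ∧
      nwp P C x y r w = x w := by
  by_cases hw : ∃ v ∈ ballX P C x (r : ℕ∞), v w = y w
  · exact absurd (nwp_eq_of_wit hw) h
  · have hxy : x w ≠ y w := fun hxy => hw ⟨x, mem_ball_self hx _, hxy⟩
    have hx' : x w = (y w)ᶜ := eq_compl_of_ne hP w (hy.1 w) (hx.1.1 w) hxy
    exact ⟨hw, hx', hxy, (nwp_eq_of_not_wit hw).trans hx'.symm⟩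

open scoped Classical in
noncomputable def flipUF (x : ↥P → Set S) (H : Set S) : ↥P → Set S :=
  fun w => if H ⊆ (x w)ᶜ then (x w)ᶜ else x w

lemma flipUF_pos {x : ↥P → Set S} {H : Set S} {w : ↥P} (h : H ⊆ (x w)ᶜ) :
    flipUF x H w = (x w)ᶜ := by
  simp only [flipUF]; rw [if_pos h]

lemma flipUF_neg {x : ↥P → Set S} {H : Set S} {w : ↥P} (h : ¬ H ⊆ (x w)ᶜ) :
    flipUF x H w = x w := by
  simp only [flipUF]; rw [if_neg h]

lemma halfspace_ne_empty (hP : IsWallSystem P) (s₀ : S) {y : ↥P → Set S}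
    (hy : IsUltra P y) (w : ↥P) : y w ≠ ∅ := by
  intro h
  have h1 : y w ⊆ (y w)ᶜ := by rw [h]; exact Set.empty_subset _
  have h2 : y w = (y w)ᶜ := ultra_mono hy w w (compl_mem_wall hP w (hy.1 w)) h1
  exact ne_compl_self s₀ (y w) h2

lemma flip_ultra (hP : IsWallSystem P) (s₀ : S) {x y : ↥P → Set S}
    (hx : IsUltra P x) (hy : IsUltra P y) (wm : ↥P) :
    IsUltra P (flipUF x (y wm)) := by
  have hHne : y wm ≠ ∅ := halfspace_ne_empty hP s₀ hy wm
  constructor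
  · intro w
    by_cases h : y wm ⊆ (x w)ᶜ
    · rw [flipUF_pos h]; exact compl_mem_wall hP w (hx.1 w)
    · rw [flipUF_neg h]; exact hx.1 w
  · intro w₁ w₂ A B hA hB hAB hvA
    by_cases h₁ : y wm ⊆ (x w₁)ᶜ
    · rw [flipUF_pos h₁] at hvA
      have hHB : y wm ⊆ B := (hvA ▸ h₁).trans hAB
      by_cases h₂ : y wm ⊆ (x w₂)ᶜ
      · rw [flipUF_pos h₂]
        by_cases hBx : B = x w₂
        · exfalso
          have hsub : y wm ⊆ B ∩ Bᶜ := Set.subset_inter hHB (by rw [hBx]; exact h₂)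
          rw [Set.inter_compl_self] at hsub
          exact hHne (Set.subset_empty_iff.mp hsub)
        · exact (eq_compl_of_ne hP w₂ (hx.1 w₂) hB hBx).symm
      · rw [flipUF_neg h₂]
        by_cases hBx : B = x w₂
        · exact hBx.symm
        · exact absurd ((eq_compl_of_ne hP w₂ (hx.1 w₂) hB hBx) ▸ hHB) h₂
    · rw [flipUF_neg h₁] at hvA
      by_cases hBx : B = x w₂
      · have hx2 : x w₂ = B := hx.2 w₁ w₂ A B hA hB hAB hvA
        have h₂ : ¬ y wm ⊆ (x w₂)ᶜ := by
          obtain ⟨p, hpH, hpx⟩ := not_subset.mp h₁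
          intro h₂
          have hp1 : p ∈ x w₁ := Set.notMem_compl_iff.mp hpx
          have hp2 : p ∈ x w₂ := by
            rw [hx2]; exact hAB (hvA ▸ hp1)
          exact (h₂ hpH) hp2
        rw [flipUF_neg h₂]; exact hx2
      · exfalso
        have hB' : B = (x w₂)ᶜ := eq_compl_of_ne hP w₂ (hx.1 w₂) hB hBx
        have hsub : x w₂ ⊆ (x w₁)ᶜ := by
          rw [← hvA] at hAB
          rw [hB'] at hAB
          exact Set.subset_compl_comm.mp hAB
        have hcon := hx.2 w₂ w₁ (x w₂) ((x w₁)ᶜ) (hx.1 w₂)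
          (compl_mem_wall hP w₁ (hx.1 w₁)) hsub rfl
        exact ne_compl_self s₀ (x w₁) hcon

lemma flip_y_eq (hP : IsWallSystem P) {x y : ↥P → Set S}
    (hx : IsUltra P x) (hy : IsUltra P y) {wm w : ↥P} (h : y wm ⊆ (x w)ᶜ) :
    y w = (x w)ᶜ :=
  ultra_mono hy wm w (compl_mem_wall hP w (hx.1 w)) h

lemma flip_dual (hP : IsWallSystem P) (s₀ : S) (hC : IsChainSystem P C)
    {x y : ↥P → Set S} (hx : x ∈ dualSpace P C) (hy : y ∈ dualSpace P C)
    {n : ℕ} (hn : wallDist P C x y = (n : ℕ∞)) (wm : ↥P) :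
    flipUF x (y wm) ∈ dualSpace P C := by
  refine ⟨flip_ultra hP s₀ hx.1 hy.1 wm, fun s => ?_⟩
  set v := flipUF x (y wm) with hv
  set F : Set ↥P := {w | y wm ⊆ (x w)ᶜ} with hF
  have hbound : wallDist P C v (principalUF P s) ≤ (n : ℕ∞) + wallDist P C x (principalUF P s) := by
    apply wallDist_le
    intro c hc hsep
    have h1 : (c ∩ F).encard ≤ (n : ℕ∞) := by
      rw [← hn]
      refine le_wallDist (hC.1.subset_mem c hc _ Set.inter_subset_left) ?_
      intro w hw
      have := flip_y_eq hP hx.1 hy.1 (hw.2 : y wm ⊆ (x w)ᶜ)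
      rw [this]
      exact (ne_compl_self s₀ (x w))
    have h2 : (c \ F).encard ≤ wallDist P C x (principalUF P s) := by
      refine le_wallDist (hC.1.subset_mem c hc _ Set.diff_subset) ?_
      intro w hw
      have hvw : v w = x w := flipUF_neg hw.2
      rw [← hvw]
      exact hsep w hw.1
    calc c.encard = ((c ∩ F) ∪ (c \ F)).encard := by rw [Set.inter_union_diff]
      _ ≤ (c ∩ F).encard + (c \ F).encard := Set.encard_union_le _ _
      _ ≤ (n : ℕ∞) + wallDist P C x (principalUF P s) := add_le_add h1 h2
  intro htop
  rw [htop, top_le_iff] at hbound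
  rcases WithTop.add_eq_top.mp hbound with h | h
  · exact (by simp : ((n : ℕ∞) ≠ ⊤)) h
  · exact hx.2 s h

lemma glue_bound (hP : IsWallSystem P) (hC : IsChainSystem P C) {m : ℕ}
    (hglu : IsGluable P C m) {x y : ↥P → Set S}
    (hxU : IsUltra P x) (hyU : IsUltra P y)
    {c : Set ↥P} (hc : c ∈ C) (hsep : ∀ w ∈ c, x w ≠ y w)
    {wm : ↥P} (hwm : wm ∈ c) (hmax : ∀ w ∈ c, y w ⊆ y wm)
    {c' : Set ↥P} (hc' : c' ∈ C) (hsep' : ∀ w ∈ c', x w ≠ y w)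
    (hge : ∀ w ∈ c', y wm ⊆ y w) :
    ∃ e ∈ C, e ⊆ (c \ {wm}) ∪ c' ∧
      c.encard + c'.encard ≤ e.encard + (m : ℕ∞) + 1 := by
  set c₁ := c \ {wm} with hc₁def
  have hc₁ : c₁ ∈ C := hC.1.subset_mem c hc _ Set.diff_subset
  have hdisj : Disjoint c₁ c' := by
    rw [Set.disjoint_left]
    intro w hw hw'
    have h1 : y w ⊆ y wm := hmax w hw.1
    have h2 : y wm ⊆ y w := hge w hw'
    have heq : y w = y wm := subset_antisymm h1 h2
    have : w = wm := wall_eq_of_mem hP (hyU.1 w) (heq ▸ hyU.1 wm)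
    exact hw.2 (by rw [this]; rfl)
  have horder : IsChainOrder P y (c₁ ∪ c') := by
    constructor
    · intro w _; exact hyU.1 w
    · intro w₁ h₁ w₂ h₂
      rcases h₁ with h₁ | h₁ <;> rcases h₂ with h₂ | h₂
      · exact chain_comp hP hC hxU hyU hc hsep h₁.1 h₂.1
      · exact Or.inl ((hmax w₁ h₁.1).trans (hge w₂ h₂))
      · exact Or.inr ((hmax w₂ h₂.1).trans (hge w₁ h₁))
      · exact chain_comp hP hC hxU hyU hc' hsep' h₁ h₂
  have hle : ∀ w₁ ∈ c₁, ∀ w₂ ∈ c', y w₁ ⊆ y w₂ :=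
    fun w₁ h₁ w₂ h₂ => (hmax w₁ h₁.1).trans (hge w₂ h₂)
  obtain ⟨b, hbsub, hbcard, -, -, -, hbmem⟩ := hglu c₁ hc₁ c' hc' y horder hdisj hle
  refine ⟨(c₁ ∪ c') \ b, hbmem, Set.diff_subset, ?_⟩
  have hwmc₁ : wm ∉ c₁ := fun h => h.2 rfl
  have hcencard : c.encard = c₁.encard + 1 := by
    have hins : insert wm c₁ = c := by
      rw [hc₁def, Set.insert_diff_singleton, Set.insert_eq_self.mpr hwm]
    rw [← hins, Set.encard_insert_of_notMem hwmc₁]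
  have hsub2 : c₁ ∪ c' ⊆ ((c₁ ∪ c') \ b) ∪ b := by
    intro w hw
    by_cases hb : w ∈ b
    · exact Or.inr hb
    · exact Or.inl ⟨hw, hb⟩
  have hcard2 : c₁.encard + c'.encard ≤ ((c₁ ∪ c') \ b).encard + (m : ℕ∞) :=
    calc c₁.encard + c'.encard = (c₁ ∪ c').encard := (Set.encard_union_eq hdisj).symm
      _ ≤ (((c₁ ∪ c') \ b) ∪ b).encard := Set.encard_mono hsub2
      _ ≤ ((c₁ ∪ c') \ b).encard + b.encard := Set.encard_union_le _ _
      _ ≤ ((c₁ ∪ c') \ b).encard + (m : ℕ∞) := add_le_add_right hbcard _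
  calc c.encard + c'.encard = (c₁.encard + c'.encard) + 1 := by
        rw [hcencard]; ring
    _ ≤ (((c₁ ∪ c') \ b).encard + (m : ℕ∞)) + 1 := add_le_add_left hcard2 1
    _ = ((c₁ ∪ c') \ b).encard + (m : ℕ∞) + 1 := rfl

end Aux

section Main

variable {S : Type*} {P : Set (Set (Set S))} {C : Set (Set ↥P)} {m : ℕ}
  {x y : ↥P → Set S} {n : ℕ}

lemma gate_left_le (hP : IsWallSystem P) (hC : IsChainSystem P C)
    (hx : x ∈ dualSpace P C) (hy : y ∈ dualSpace P C)
    (hn : wallDist P C x y = (n : ℕ∞)) (r : ℕ) :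
    wallDist P C x (nwp P C x y r) ≤ (r : ℕ∞) := by
  apply wallDist_le
  intro c hc hsep
  have hprops := fun w hw => sep_nwp_left hP hx hy.1 (hsep w hw)
  have hsepxy : ∀ w ∈ c, x w ≠ y w := fun w hw => (hprops w hw).2.1
  have hcn : c.encard ≤ (n : ℕ∞) := hn ▸ le_wallDist hc hsepxy
  exact wit_chain_le hP hC hx.1 hy.1 hc hsepxy (fun w hw => (hprops w hw).1)
    (finite_of_encard_le hcn)

lemma gate_right_le (hP : IsWallSystem P) (s₀ : S) (hC : IsChainSystem P C)
    (hglu : IsGluable P C m)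
    (hx : x ∈ dualSpace P C) (hy : y ∈ dualSpace P C)
    (hn : wallDist P C x y = (n : ℕ∞)) {r : ℕ} (hr : r ≤ n) :
    wallDist P C (nwp P C x y r) y ≤ ((n - r : ℕ) : ℕ∞) + (m : ℕ∞) := by
  apply wallDist_le
  intro c hc hsepgy
  have hprops := fun w hw => sep_nwp_right hP hx hy.1 (hsepgy w hw)
  have hsepxy : ∀ w ∈ c, x w ≠ y w := fun w hw => (hprops w hw).2.2.1
  have hcn : c.encard ≤ (n : ℕ∞) := hn ▸ le_wallDist hc hsepxy
  have hfin : c.Finite := finite_of_encard_le hcn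
  rcases c.eq_empty_or_nonempty with rfl | hne
  · simp
  obtain ⟨wm, hwm, hmax⟩ := exists_max_wall hP hC hx.1 hy.1 hc hsepxy hfin hne
  set v := flipUF x (y wm) with hvdef
  have hvdual : v ∈ dualSpace P C := flip_dual hP s₀ hC hx hy hn wm
  have hxwm : x wm = (y wm)ᶜ := (hprops wm hwm).2.1
  have hvwm : v wm = y wm := by
    have hcond : y wm ⊆ (x wm)ᶜ := by rw [hxwm, compl_compl]
    rw [hvdef, flipUF_pos hcond, hxwm, compl_compl]
  have hnotle : ¬ wallDist P C x v ≤ (r : ℕ∞) := fun hle =>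
    (hprops wm hwm).1 ⟨v, ⟨hvdual, hle⟩, hvwm⟩
  obtain ⟨c', hc', hsepxv, hcard'⟩ := exists_of_lt_wallDist (not_le.mp hnotle)
  have hflip : ∀ w ∈ c', y wm ⊆ (x w)ᶜ := by
    intro w hw
    by_contra hcon
    exact hsepxv w hw (flipUF_neg hcon).symm
  have hyc' : ∀ w ∈ c', y w = (x w)ᶜ := fun w hw => flip_y_eq hP hx.1 hy.1 (hflip w hw)
  have hsepxy' : ∀ w ∈ c', x w ≠ y w := by
    intro w hw
    rw [hyc' w hw]
    exact ne_compl_self s₀ (x w)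
  have hge : ∀ w ∈ c', y wm ⊆ y w := by
    intro w hw; rw [hyc' w hw]; exact hflip w hw
  have hc'n : c'.encard ≤ (n : ℕ∞) := hn ▸ le_wallDist hc' hsepxy'
  obtain ⟨e, he, hesub, hcard⟩ :=
    glue_bound hP hC hglu hx.1 hy.1 hc hsepxy hwm hmax hc' hsepxy' hge
  have hsepe : ∀ w ∈ e, x w ≠ y w := by
    intro w hw
    rcases hesub hw with h | h
    · exact hsepxy w h.1
    · exact hsepxy' w h
  have hen : e.encard ≤ (n : ℕ∞) := hn ▸ le_wallDist he hsepe
  obtain ⟨k, hk, hkn⟩ := exists_coe_of_le hcn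
  obtain ⟨k', hk', hk'n⟩ := exists_coe_of_le hc'n
  obtain ⟨ke, hke, hken⟩ := exists_coe_of_le hen
  rw [hk]
  rw [hk, hk', hke] at hcard
  rw [hk'] at hcard'
  have hc1 : k + k' ≤ ke + m + 1 := by exact_mod_cast hcard
  have hc2 : r < k' := by exact_mod_cast hcard'
  have hfin2 : k ≤ (n - r) + m := by omega
  calc ((k : ℕ∞)) ≤ ((n - r + m : ℕ) : ℕ∞) := by exact_mod_cast hfin2
    _ = ((n - r : ℕ) : ℕ∞) + (m : ℕ∞) := by push_cast; ring

lemma gate_lower (hP : IsWallSystem P) (s₀ : S) (hC : IsChainSystem P C)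
    (hglu : IsGluable P C m)
    (hx : x ∈ dualSpace P C) (hy : y ∈ dualSpace P C)
    (hn : wallDist P C x y = (n : ℕ∞)) {r : ℕ} (hr : r ≤ n) :
    ((n - r : ℕ) : ℕ∞) ≤ wallDist P C (nwp P C x y r) y ∧
    (r : ℕ∞) ≤ wallDist P C x (nwp P C x y r) + (m : ℕ∞) := by
  rcases Nat.eq_zero_or_pos n with hn0 | hnpos
  · subst hn0
    have hr0 : r = 0 := Nat.le_zero.mp hr
    subst hr0
    constructor <;> simp
  have hlt : ((n - 1 : ℕ) : ℕ∞) < wallDist P C x y := by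
    rw [hn]; exact_mod_cast Nat.sub_lt hnpos Nat.one_pos
  obtain ⟨c, hc, hsepxy, hclt⟩ := exists_of_lt_wallDist hlt
  have hcn : c.encard ≤ (n : ℕ∞) := hn ▸ le_wallDist hc hsepxy
  have hfin := finite_of_encard_le hcn
  set cw := {w ∈ c | ∃ v ∈ ballX P C x (r : ℕ∞), v w = y w} with hcwdef
  have hcwsub : cw ⊆ c := Set.sep_subset _ _
  have hcwC : cw ∈ C := hC.1.subset_mem c hc _ hcwsub
  have hcuC : c \ cw ∈ C := hC.1.subset_mem c hc _ Set.diff_subset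
  have hcww : cw.encard ≤ (r : ℕ∞) :=
    wit_chain_le hP hC hx.1 hy.1 hcwC (fun w hw => hsepxy w hw.1)
      (fun w hw => hw.2) (hfin.subset hcwsub)
  have hsepxg : ∀ w ∈ cw, x w ≠ nwp P C x y r w := by
    intro w hw
    rw [nwp_eq_of_wit hw.2]
    exact hsepxy w hw.1
  have hsepgy : ∀ w ∈ c \ cw, nwp P C x y r w ≠ y w := by
    intro w hw
    have hnw : ¬ ∃ v ∈ ballX P C x (r : ℕ∞), v w = y w := fun hcon => hw.2 ⟨hw.1, hcon⟩
    rw [nwp_eq_of_not_wit hnw]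
    exact (ne_compl_self s₀ (y w)).symm
  have hcu_le : (c \ cw).encard ≤ wallDist P C (nwp P C x y r) y := le_wallDist hcuC hsepgy
  have hcw_le : cw.encard ≤ wallDist P C x (nwp P C x y r) := le_wallDist hcwC hsepxg
  have hsplit : (c \ cw).encard + cw.encard = c.encard := by
    rw [← Set.encard_union_eq disjoint_sdiff_left, Set.diff_union_of_subset hcwsub]
  have hM3 : wallDist P C (nwp P C x y r) y ≤ ((n - r : ℕ) : ℕ∞) + (m : ℕ∞) :=
    gate_right_le hP s₀ hC hglu hx hy hn hr
  obtain ⟨kc, hkc, hkcn⟩ := exists_coe_of_le hcn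
  obtain ⟨kw, hkw, hkwr⟩ := exists_coe_of_le hcww
  obtain ⟨ku, hku, -⟩ := exists_coe_of_le ((Set.encard_mono Set.diff_subset).trans hcn)
  have hkceq : kc = n := by
    rw [hkc] at hclt
    have : n - 1 < kc := by exact_mod_cast hclt
    omega
  have hkueq : ku ≤ n - r + m := by
    have h1 : ((ku : ℕ) : ℕ∞) ≤ ((n - r + m : ℕ) : ℕ∞) := by
      rw [← hku]
      refine (hcu_le.trans hM3).trans ?_
      push_cast; exact le_refl _
    exact_mod_cast h1
  have hsum : ku + kw = kc := by
    rw [hku, hkw, hkc] at hsplit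
    exact_mod_cast hsplit
  constructor
  · refine le_trans ?_ hcu_le
    rw [hku]
    have : n - r ≤ ku := by omega
    exact_mod_cast this
  · have hrkw : r ≤ kw + m := by omega
    calc (r : ℕ∞) ≤ ((kw + m : ℕ) : ℕ∞) := by exact_mod_cast hrkw
      _ = ((kw : ℕ) : ℕ∞) + (m : ℕ∞) := by push_cast; ring
      _ ≤ wallDist P C x (nwp P C x y r) + (m : ℕ∞) := by
          rw [← hkw]; exact add_le_add_left hcw_le _

lemma gate_pair_le (hP : IsWallSystem P) (s₀ : S) (hC : IsChainSystem P C)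
    (hglu : IsGluable P C m)
    (hx : x ∈ dualSpace P C) (hy : y ∈ dualSpace P C)
    (hn : wallDist P C x y = (n : ℕ∞)) {r₁ r₂ : ℕ} (h12 : r₁ ≤ r₂) (hr₂ : r₂ ≤ n) :
    wallDist P C (nwp P C x y r₁) (nwp P C x y r₂) ≤
      ((r₂ - r₁ : ℕ) : ℕ∞) + ((3 * m : ℕ) : ℕ∞) := by
  apply wallDist_le
  intro c hc hsepg
  have hprops : ∀ w ∈ c, (¬ ∃ v ∈ ballX P C x (r₁ : ℕ∞), v w = y w) ∧
      (∃ v ∈ ballX P C x (r₂ : ℕ∞), v w = y w) ∧ x w = (y w)ᶜ ∧ x w ≠ y w := by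
    intro w hw
    by_cases h1 : ∃ v ∈ ballX P C x (r₁ : ℕ∞), v w = y w
    · exfalso
      obtain ⟨v, hvB, hvw⟩ := h1
      have h2 : ∃ v ∈ ballX P C x (r₂ : ℕ∞), v w = y w :=
        ⟨v, ⟨hvB.1, hvB.2.trans (by exact_mod_cast h12)⟩, hvw⟩
      exact hsepg w hw (by rw [nwp_eq_of_wit ⟨v, hvB, hvw⟩, nwp_eq_of_wit h2])
    · have hxy : x w ≠ y w := fun hxy => h1 ⟨x, mem_ball_self hx _, hxy⟩
      have hx' : x w = (y w)ᶜ := eq_compl_of_ne hP w (hy.1.1 w) (hx.1.1 w) hxy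
      by_cases h2 : ∃ v ∈ ballX P C x (r₂ : ℕ∞), v w = y w
      · exact ⟨h1, h2, hx', hxy⟩
      · exact absurd (by rw [nwp_eq_of_not_wit h1, nwp_eq_of_not_wit h2]) (hsepg w hw)
  have hsepxy : ∀ w ∈ c, x w ≠ y w := fun w hw => (hprops w hw).2.2.2
  have hsepxg2 : ∀ w ∈ c, x w ≠ nwp P C x y r₂ w := by
    intro w hw
    rw [nwp_eq_of_wit (hprops w hw).2.1]
    exact hsepxy w hw
  have hcn : c.encard ≤ (n : ℕ∞) := hn ▸ le_wallDist hc hsepxy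
  have hfin := finite_of_encard_le hcn
  rcases c.eq_empty_or_nonempty with rfl | hne
  · simp
  obtain ⟨wm, hwm, hmax⟩ := exists_max_wall hP hC hx.1 hy.1 hc hsepxy hfin hne
  set v := flipUF x (y wm) with hvdef
  have hvdual : v ∈ dualSpace P C := flip_dual hP s₀ hC hx hy hn wm
  have hxwm : x wm = (y wm)ᶜ := (hprops wm hwm).2.2.1
  have hvwm : v wm = y wm := by
    have hcond : y wm ⊆ (x wm)ᶜ := by rw [hxwm, compl_compl]
    rw [hvdef, flipUF_pos hcond, hxwm, compl_compl]
  have hnotle : ¬ wallDist P C x v ≤ (r₁ : ℕ∞) := fun hle =>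
    (hprops wm hwm).1 ⟨v, ⟨hvdual, hle⟩, hvwm⟩
  obtain ⟨c', hc', hsepxv, hcard'⟩ := exists_of_lt_wallDist (not_le.mp hnotle)
  have hflip : ∀ w ∈ c', y wm ⊆ (x w)ᶜ := by
    intro w hw; by_contra hcon; exact hsepxv w hw (flipUF_neg hcon).symm
  have hyc' : ∀ w ∈ c', y w = (x w)ᶜ := fun w hw => flip_y_eq hP hx.1 hy.1 (hflip w hw)
  have hsepxy' : ∀ w ∈ c', x w ≠ y w := by
    intro w hw; rw [hyc' w hw]; exact ne_compl_self s₀ (x w)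
  have hge : ∀ w ∈ c', y wm ⊆ y w := by
    intro w hw; rw [hyc' w hw]; exact hflip w hw
  obtain ⟨u, huB, huwm⟩ := (hprops wm hwm).2.1
  have hwit2 : ∀ w ∈ c', ∃ vv ∈ ballX P C x (r₂ : ℕ∞), vv w = y w := by
    intro w hw
    exact ⟨u, huB, ultra_mono huB.1.1 wm w (hy.1.1 w) (by rw [huwm]; exact hge w hw)⟩
  obtain ⟨e, he, hesub, hcard⟩ :=
    glue_bound hP hC hglu hx.1 hy.1 hc hsepxy hwm hmax hc' hsepxy' hge
  have hsepe : ∀ w ∈ e, x w ≠ nwp P C x y r₂ w := by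
    intro w hw
    rcases hesub hw with h | h
    · exact hsepxg2 w h.1
    · rw [nwp_eq_of_wit (hwit2 w h)]
      exact hsepxy' w h
  have her2 : e.encard ≤ (r₂ : ℕ∞) :=
    (le_wallDist he hsepe).trans (gate_left_le hP hC hx hy hn r₂)
  have hc'n : c'.encard ≤ (n : ℕ∞) := hn ▸ le_wallDist hc' hsepxy'
  obtain ⟨k, hk, hkn⟩ := exists_coe_of_le hcn
  obtain ⟨k', hk', -⟩ := exists_coe_of_le hc'n
  obtain ⟨ke, hke, hker⟩ := exists_coe_of_le her2
  rw [hk]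
  rw [hk, hk', hke] at hcard
  rw [hk'] at hcard'
  have hc1 : k + k' ≤ ke + m + 1 := by exact_mod_cast hcard
  have hc2 : r₁ < k' := by exact_mod_cast hcard'
  have hfin2 : k ≤ (r₂ - r₁) + 3 * m := by omega
  calc ((k : ℕ∞)) ≤ ((r₂ - r₁ + 3 * m : ℕ) : ℕ∞) := by exact_mod_cast hfin2
    _ = ((r₂ - r₁ : ℕ) : ℕ∞) + ((3 * m : ℕ) : ℕ∞) := by push_cast; ring

lemma gate_pair_ge (hP : IsWallSystem P) (s₀ : S) (hC : IsChainSystem P C)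
    (hglu : IsGluable P C m)
    (hx : x ∈ dualSpace P C) (hy : y ∈ dualSpace P C)
    (hn : wallDist P C x y = (n : ℕ∞)) {r₁ r₂ : ℕ} (h12 : r₁ ≤ r₂) (hr₂ : r₂ ≤ n) :
    ((r₂ - r₁ : ℕ) : ℕ∞) ≤
      wallDist P C (nwp P C x y r₁) (nwp P C x y r₂) + ((3 * m : ℕ) : ℕ∞) := by
  have hD : wallDist P C (nwp P C x y r₁) (nwp P C x y r₂) ≤ ((r₂ - r₁ + 3 * m : ℕ) : ℕ∞) := by
    refine (gate_pair_le hP s₀ hC hglu hx hy hn h12 hr₂).trans ?_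
    push_cast; exact le_refl _
  obtain ⟨d, hd, -⟩ := exists_coe_of_le hD
  have h1 : wallDist P C x (nwp P C x y r₂) ≤
      (r₁ : ℕ∞) + wallDist P C (nwp P C x y r₁) (nwp P C x y r₂) := by
    apply wallDist_le
    intro c hc hsep
    have hprops := fun w hw => sep_nwp_left hP hx hy.1 (hsep w hw)
    set cw := {w ∈ c | ∃ v ∈ ballX P C x (r₁ : ℕ∞), v w = y w} with hcwdef
    have hcwsub : cw ⊆ c := Set.sep_subset _ _
    have hcwC : cw ∈ C := hC.1.subset_mem c hc _ hcwsub
    have hcuC : c \ cw ∈ C := hC.1.subset_mem c hc _ Set.diff_subset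
    have hw1 : cw.encard ≤ (r₁ : ℕ∞) := by
      refine (le_wallDist hcwC ?_).trans (gate_left_le hP hC hx hy hn r₁)
      intro w hw
      rw [nwp_eq_of_wit hw.2]
      exact (hprops w hw.1).2.1
    have hu1 : (c \ cw).encard ≤ wallDist P C (nwp P C x y r₁) (nwp P C x y r₂) := by
      refine le_wallDist hcuC ?_
      intro w hw
      have hnw : ¬ ∃ v ∈ ballX P C x (r₁ : ℕ∞), v w = y w := fun hcon => hw.2 ⟨hw.1, hcon⟩
      rw [nwp_eq_of_not_wit hnw, (hprops w hw.1).2.2]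
      exact (ne_compl_self s₀ (y w)).symm
    calc c.encard = (c \ cw).encard + cw.encard := by
          rw [← Set.encard_union_eq disjoint_sdiff_left, Set.diff_union_of_subset hcwsub]
      _ ≤ wallDist P C (nwp P C x y r₁) (nwp P C x y r₂) + (r₁ : ℕ∞) := add_le_add hu1 hw1
      _ = (r₁ : ℕ∞) + wallDist P C (nwp P C x y r₁) (nwp P C x y r₂) := add_comm _ _
  have h2 : (r₂ : ℕ∞) ≤ wallDist P C x (nwp P C x y r₂) + (m : ℕ∞) :=
    (gate_lower hP s₀ hC hglu hx hy hn hr₂).2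
  have h3 : (r₂ : ℕ∞) ≤ ((r₁ : ℕ∞) + (d : ℕ∞)) + (m : ℕ∞) := by
    refine h2.trans (add_le_add_left ?_ _)
    rw [← hd]
    exact h1.trans (by rw [hd])
  have h4 : r₂ ≤ r₁ + d + m := by exact_mod_cast h3
  have h5 : r₂ - r₁ ≤ d + 3 * m := by omega
  rw [hd]
  calc ((r₂ - r₁ : ℕ) : ℕ∞) ≤ ((d + 3 * m : ℕ) : ℕ∞) := by exact_mod_cast h5
    _ = ((d : ℕ) : ℕ∞) + ((3 * m : ℕ) : ℕ∞) := by push_cast; ring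

end Main

/-- **Normal wall paths are rough geodesics** (Proposition 4.8): if `C` is an
`m`-gluable system of chains and `dist_C x y = n`, then the normal wall path
`r ↦ σ_{xy}(r)` satisfies `r - m ≤ dist_C (x, σ_{xy} r) ≤ r` and
`n - r ≤ dist_C (σ_{xy} r, y) ≤ n - r + m`, and is a `3m`-rough geodesic. -/
theorem nwp_rough_geodesic
    {S : Type*} (P : Set (Set (Set S))) (C : Set (Set ↥P))
    (hP : IsWallSystem P) (hC : IsChainSystem P C)
    (m : ℕ) (hglu : IsGluable P C m)
    (x y : ↥P → Set S) (hx : x ∈ dualSpace P C) (hy : y ∈ dualSpace P C)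
    (n : ℕ) (hn : wallDist P C x y = (n : ℕ∞)) :
    (∀ r : ℕ, r ≤ n →
      wallDist P C x (nwp P C x y r) ≤ (r : ℕ∞) ∧
      (r : ℕ∞) ≤ wallDist P C x (nwp P C x y r) + (m : ℕ∞) ∧
      ((n - r : ℕ) : ℕ∞) ≤ wallDist P C (nwp P C x y r) y ∧
      wallDist P C (nwp P C x y r) y ≤ ((n - r : ℕ) : ℕ∞) + (m : ℕ∞)) ∧
    (∀ r₁ r₂ : ℕ, r₁ ≤ r₂ → r₂ ≤ n →
      ((r₂ - r₁ : ℕ) : ℕ∞)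
          ≤ wallDist P C (nwp P C x y r₁) (nwp P C x y r₂) + ((3 * m : ℕ) : ℕ∞) ∧
      wallDist P C (nwp P C x y r₁) (nwp P C x y r₂)
          ≤ ((r₂ - r₁ : ℕ) : ℕ∞) + ((3 * m : ℕ) : ℕ∞)) := by
  classical
  by_cases hS : Nonempty S
  · obtain ⟨s₀⟩ := hS
    refine ⟨fun r hr => ?_, fun r₁ r₂ h12 hr2 => ?_⟩
    · exact ⟨gate_left_le hP hC hx hy hn r,
        (gate_lower hP s₀ hC hglu hx hy hn hr).2,
        (gate_lower hP s₀ hC hglu hx hy hn hr).1,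
        gate_right_le hP s₀ hC hglu hx hy hn hr⟩
    · exact ⟨gate_pair_ge hP s₀ hC hglu hx hy hn h12 hr2,
        gate_pair_le hP s₀ hC hglu hx hy hn h12 hr2⟩
  · have hisE : IsEmpty S := not_nonempty_iff.mp hS
    have hall : ∀ u v : ↥P → Set S, wallDist P C u v ≤ 0 := by
      intro u v
      apply wallDist_le
      intro c _ h
      have hce : c = ∅ := Set.eq_empty_iff_forall_notMem.mpr fun w hw =>
        (h w hw) ((Set.eq_empty_of_isEmpty (u w)).trans (Set.eq_empty_of_isEmpty (v w)).symm)
      simp [hce]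
    have hn0 : (n : ℕ∞) = 0 := by
      rw [← hn]; exact le_antisymm (hall x y) zero_le
    have hn0' : n = 0 := by exact_mod_cast hn0
    subst hn0'
    constructor
    · intro r hr
      have hr0 : r = 0 := Nat.le_zero.mp hr
      subst hr0
      exact ⟨(hall _ _).trans (by simp), by simp, by simp, (hall _ _).trans (by simp)⟩
    · intro r₁ r₂ h12 hr2
      have h2 : r₂ = 0 := Nat.le_zero.mp hr2
      have h1 : r₁ = 0 := by omega
      subst h1; subst h2
      exact ⟨by simp, (hall _ _).trans (by simp)⟩

end WallDuality
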